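/- Let D be a bounded domain in ℂⁿ. Then for all x, y ∈ D one has |s_D(x) − s_D(y)| ≤ 2·tanh(K_D(x, y)/2), where K_D is the Kobayashi distance on D. In other words, s_D is Lipschitz with constant 2 with respect to the metric T(x, y) = tanh(K_D(x, y)/2). -/

import Mathlib

/-!
The Poincaré distance is the pullback of the hyperbolic metric of the upper half-plane under the
Cayley transform, so it satisfies the triangle inequality, and by Schwarz–Pick holomorphic
self-maps of `Δ` do not increase it. Hence for holomorphic `F : D → Δ` every Kobayashi chain from
`x` to `y` is at least as long as `ρ(F x, F y)`, i.e. `ρ(F x, F y) ≤ K_D(x, y)`. For holomorphic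
`f : D → Bⁿ` with `f x = 0`, apply this to `F = g ∘ f` with `g` a functional of norm at most one
and `g (f y) = ‖f y‖`: this gives `‖f y‖ ≤ tanh (K_D(x, y) / 2)`. Finally, if `f` is a squeezing
map at `x` with `Bⁿ(0, r) ⊆ f D`, then `(f - f y) / (1 + ‖f y‖)` is one at `y` with radius
`(r - ‖f y‖) / (1 + ‖f y‖) ≥ r - 2 ‖f y‖`, so `s_D(x) ≤ s_D(y) + 2 tanh (K_D(x, y) / 2)`.
-/

open Metric

/-- The squeezing function of a bounded domain `D ⊆ ℂⁿ` at a point `p ∈ D`: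
the supremum of all `r > 0` such that some injective holomorphic map `f : D → Bⁿ`
with `f p = 0` satisfies `Bⁿ(0, r) ⊆ f '' D`. -/
noncomputable def squeezingFn {n : ℕ} (D : Set (EuclideanSpace ℂ (Fin n)))
    (p : EuclideanSpace ℂ (Fin n)) : ℝ :=
  sSup { r : ℝ | ∃ f : EuclideanSpace ℂ (Fin n) → EuclideanSpace ℂ (Fin n),
    DifferentiableOn ℂ f D ∧ Set.InjOn f D ∧ f '' D ⊆ ball 0 1 ∧ f p = 0 ∧
    0 < r ∧ ball (0 : EuclideanSpace ℂ (Fin n)) r ⊆ f '' D }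

/-- Inverse hyperbolic tangent: `artanh x = (1/2) log((1+x)/(1-x))`. -/
noncomputable def artanh (x : ℝ) : ℝ := Real.log ((1 + x) / (1 - x)) / 2

/-- The Poincaré distance on the unit disc: `ρ(a,b) = 2 artanh |(a-b)/(1 - ā b)|`. -/
noncomputable def poincareDist (a b : ℂ) : ℝ :=
  2 * artanh ‖(a - b) / (1 - (starRingEnd ℂ) a * b)‖

/-- The Kobayashi distance on a set `D`: the infimum over finite chains of holomorphic
discs `φ i : Δ → D` joining `x` to `y` of the sum of Poincaré distances. -/
noncomputable def kobayashiDist {E : Type*} [NormedAddCommGroup E] [NormedSpace ℂ E]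
    (D : Set E) (x y : E) : ℝ :=
  sInf { t : ℝ | ∃ (k : ℕ) (φ : Fin (k + 1) → ℂ → E) (a b : Fin (k + 1) → ℂ),
    (∀ i, DifferentiableOn ℂ (φ i) (Metric.ball (0 : ℂ) 1) ∧
      (φ i) '' (Metric.ball (0 : ℂ) 1) ⊆ D ∧
      a i ∈ Metric.ball (0 : ℂ) 1 ∧ b i ∈ Metric.ball (0 : ℂ) 1) ∧
    φ 0 (a 0) = x ∧ φ (Fin.last k) (b (Fin.last k)) = y ∧
    (∀ i : Fin k, φ i.castSucc (b i.castSucc) = φ i.succ (a i.succ)) ∧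
    t = ∑ i, poincareDist (a i) (b i) }

open Complex ComplexConjugate Set

noncomputable def moebius (a z : ℂ) : ℂ := (a - z) / (1 - conj a * z)

lemma normSq_one_sub_conj_mul_sub_normSq_sub (a z : ℂ) :
    normSq (1 - conj a * z) - normSq (a - z) = (1 - normSq a) * (1 - normSq z) := by
  simp only [normSq_apply, sub_re, sub_im, mul_re, mul_im, one_re, one_im, conj_re, conj_im]
  ring

lemma norm_sub_lt_norm_one_sub_conj_mul {a z : ℂ} (ha : ‖a‖ < 1) (hz : ‖z‖ < 1) :
    ‖a - z‖ < ‖1 - conj a * z‖ := by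
  have key := normSq_one_sub_conj_mul_sub_normSq_sub a z
  rw [← Complex.sq_norm, ← Complex.sq_norm, ← Complex.sq_norm, ← Complex.sq_norm] at key
  have : 0 < (1 - ‖a‖ ^ 2) * (1 - ‖z‖ ^ 2) := by
    apply mul_pos <;> nlinarith [norm_nonneg a, norm_nonneg z]
  exact lt_of_pow_lt_pow_left₀ 2 (norm_nonneg _) (by linarith)

lemma one_sub_conj_mul_ne_zero {a z : ℂ} (ha : ‖a‖ < 1) (hz : ‖z‖ < 1) :
    1 - conj a * z ≠ 0 :=
  norm_pos_iff.1 ((norm_nonneg _).trans_lt (norm_sub_lt_norm_one_sub_conj_mul ha hz))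

lemma norm_moebius_lt_one {a z : ℂ} (ha : ‖a‖ < 1) (hz : ‖z‖ < 1) : ‖moebius a z‖ < 1 := by
  have h := norm_sub_lt_norm_one_sub_conj_mul ha hz
  rwa [moebius, norm_div, div_lt_one ((norm_nonneg _).trans_lt h)]

@[simp] lemma moebius_self (a : ℂ) : moebius a a = 0 := by simp [moebius]

@[simp] lemma moebius_zero_right (a : ℂ) : moebius a 0 = a := by simp [moebius]

@[simp] lemma moebius_zero_left (z : ℂ) : moebius 0 z = -z := by simp [moebius]

lemma moebius_moebius {a z : ℂ} (ha : ‖a‖ < 1) (hz : ‖z‖ < 1) :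
    moebius a (moebius a z) = z := by
  have hD := one_sub_conj_mul_ne_zero ha hz
  have hX := one_sub_conj_mul_ne_zero ha ha
  have num : a - (a - z) / (1 - conj a * z) = z * (1 - conj a * a) / (1 - conj a * z) := by
    rw [eq_div_iff hD, sub_mul, div_mul_cancel₀ _ hD]
    ring
  have den : 1 - conj a * ((a - z) / (1 - conj a * z)) = (1 - conj a * a) / (1 - conj a * z) := by
    rw [eq_div_iff hD, ← mul_div_assoc, sub_mul, div_mul_cancel₀ _ hD]
    ring
  rw [moebius, moebius, num, den, mul_div_assoc, mul_div_cancel_right₀ _ (div_ne_zero hX hD)]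

lemma differentiableOn_moebius {a : ℂ} (ha : ‖a‖ < 1) :
    DifferentiableOn ℂ (moebius a) (ball 0 1) :=
  DifferentiableOn.div (by fun_prop) (by fun_prop) fun _ hz ↦
    one_sub_conj_mul_ne_zero ha (mem_ball_zero_iff.1 hz)

lemma mapsTo_moebius {a : ℂ} (ha : ‖a‖ < 1) : MapsTo (moebius a) (ball 0 1) (ball 0 1) :=
  fun _ hz ↦ mem_ball_zero_iff.2 (norm_moebius_lt_one ha (mem_ball_zero_iff.1 hz))

lemma norm_moebius_le_of_mapsTo {f : ℂ → ℂ} (hf : DifferentiableOn ℂ f (ball 0 1))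
    (hmaps : MapsTo f (ball 0 1) (ball 0 1)) {a z : ℂ} (ha : ‖a‖ < 1) (hz : ‖z‖ < 1) :
    ‖moebius (f a) (f z)‖ ≤ ‖moebius a z‖ := by
  have hfa : ‖f a‖ < 1 := mem_ball_zero_iff.1 (hmaps (mem_ball_zero_iff.2 ha))
  have hmaps' := (mapsTo_moebius hfa).comp (hmaps.comp (mapsTo_moebius ha))
  have hdiff := (differentiableOn_moebius hfa).comp
    (hf.comp (differentiableOn_moebius ha) (mapsTo_moebius ha)) (hmaps.comp (mapsTo_moebius ha))
  have := Complex.norm_le_norm_of_mapsTo_ball hdiff (hmaps'.mono_right ball_subset_closedBall)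
    (by simp) (norm_moebius_lt_one ha hz)
  simpa [moebius_moebius ha hz] using this

lemma artanh_eq_real_artanh {x : ℝ} (hx : x ∈ Icc (-1) 1) : artanh x = Real.artanh x := by
  rw [Real.artanh_eq_half_log hx, artanh]
  ring

lemma poincareDist_eq_two_mul_artanh {a z : ℂ} (ha : ‖a‖ < 1) (hz : ‖z‖ < 1) :
    poincareDist a z = 2 * Real.artanh ‖moebius a z‖ := by
  have h := norm_moebius_lt_one ha hz
  rw [← artanh_eq_real_artanh ⟨by linarith [norm_nonneg (moebius a z)], h.le⟩]
  rfl

lemma poincareDist_le_of_mapsTo {f : ℂ → ℂ} (hf : DifferentiableOn ℂ f (ball 0 1))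
    (hmaps : MapsTo f (ball 0 1) (ball 0 1)) {a z : ℂ} (ha : ‖a‖ < 1)
    (hz : ‖z‖ < 1) : poincareDist (f a) (f z) ≤ poincareDist a z := by
  have hfa : ‖f a‖ < 1 := mem_ball_zero_iff.1 (hmaps (mem_ball_zero_iff.2 ha))
  have hfz : ‖f z‖ < 1 := mem_ball_zero_iff.1 (hmaps (mem_ball_zero_iff.2 hz))
  rw [poincareDist_eq_two_mul_artanh hfa hfz, poincareDist_eq_two_mul_artanh ha hz]
  have := Real.artanh_le_artanh (by linarith [norm_nonneg (moebius (f a) (f z))])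
    (norm_moebius_lt_one ha hz) (norm_moebius_le_of_mapsTo hf hmaps ha hz)
  linarith

lemma norm_le_tanh_of_poincareDist_zero_le {w : ℂ} {t : ℝ} (hw : ‖w‖ < 1)
    (h : poincareDist 0 w ≤ t) : ‖w‖ ≤ Real.tanh (t / 2) := by
  rw [poincareDist_eq_two_mul_artanh (by simp) hw, moebius_zero_left, norm_neg] at h
  rw [← Real.artanh_le_artanh_iff ⟨by linarith [norm_nonneg w], hw⟩
    ⟨Real.neg_one_lt_tanh _, Real.tanh_lt_one _⟩, Real.artanh_tanh]
  linarith

noncomputable def cayley (z : ℂ) : ℂ := I * (1 + z) / (1 - z)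

lemma im_cayley_pos {z : ℂ} (hz : ‖z‖ < 1) : 0 < (cayley z).im := by
  have hz1 : 1 - z ≠ 0 := sub_ne_zero.2 fun h ↦ by simp [← h] at hz
  have hsq : z.re * z.re + z.im * z.im < 1 := by
    rw [← normSq_apply, ← Complex.sq_norm]; nlinarith [norm_nonneg z]
  rw [cayley, div_im]
  simp only [mul_re, mul_im, I_re, I_im, add_re, add_im, one_re, one_im, sub_re, sub_im]
  have := normSq_pos.2 hz1
  rw [← sub_div]
  exact div_pos (by nlinarith) this

lemma dist_cayley_div_dist_conj {u v : ℂ} (hu : ‖u‖ < 1) (hv : ‖v‖ < 1) :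
    dist (cayley u) (cayley v) / dist (cayley u) (conj (cayley v)) = ‖moebius u v‖ := by
  have hu1 : 1 - u ≠ 0 := sub_ne_zero.2 fun h ↦ by simp [← h] at hu
  have hv1 : 1 - v ≠ 0 := sub_ne_zero.2 fun h ↦ by simp [← h] at hv
  have hv1' : 1 - conj v ≠ 0 := by
    simpa only [map_sub, map_one] using (map_ne_zero (starRingEnd ℂ)).2 hv1
  have e1 : cayley u - cayley v = 2 * I * (u - v) / ((1 - u) * (1 - v)) := by
    rw [cayley, cayley, div_sub_div _ _ hu1 hv1]; ring
  have e2 : cayley u - conj (cayley v) = 2 * I * (1 - u * conj v) / ((1 - u) * (1 - conj v)) := by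
    simp only [cayley, map_div₀, map_mul, conj_I, map_add, map_sub, map_one]
    rw [div_sub_div _ _ hu1 hv1']; ring
  have hconj : ‖1 - u * conj v‖ = ‖1 - conj u * v‖ := by
    rw [← Complex.norm_conj]; simp [mul_comm]
  have hconj' : ‖1 - conj v‖ = ‖1 - v‖ := by
    rw [← Complex.norm_conj]; simp
  rw [dist_eq, dist_eq, e1, e2, moebius]
  simp only [norm_div, norm_mul, hconj, hconj']
  have : ‖1 - conj u * v‖ ≠ 0 := norm_ne_zero_iff.2 (one_sub_conj_mul_ne_zero hu hv)
  field_simp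

noncomputable def cayleyUHP (z : ℂ) (hz : ‖z‖ < 1) : UpperHalfPlane := .mk (cayley z) (im_cayley_pos hz)

lemma poincareDist_eq_dist_cayleyUHP {u v : ℂ} (hu : ‖u‖ < 1) (hv : ‖v‖ < 1) :
    poincareDist u v = dist (cayleyUHP u hu) (cayleyUHP v hv) := by
  have h : Real.tanh (dist (cayleyUHP u hu) (cayleyUHP v hv) / 2) = ‖moebius u v‖ := by
    rw [UpperHalfPlane.tanh_half_dist]
    exact dist_cayley_div_dist_conj hu hv
  rw [poincareDist_eq_two_mul_artanh hu hv, ← h, Real.artanh_tanh]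
  ring

lemma poincareDist_comm {u v : ℂ} (hu : ‖u‖ < 1) (hv : ‖v‖ < 1) :
    poincareDist u v = poincareDist v u := by
  rw [poincareDist_eq_dist_cayleyUHP hu hv, poincareDist_eq_dist_cayleyUHP hv hu, dist_comm]

lemma dist_le_sum_dist_of_chain {X : Type*} [PseudoMetricSpace X] :
    ∀ {k : ℕ} (p q : Fin (k + 1) → X), (∀ i : Fin k, q i.castSucc = p i.succ) →
      dist (p 0) (q (Fin.last k)) ≤ ∑ i, dist (p i) (q i)
  | 0, p, q, _ => by simp
  | k + 1, p, q, hlink => by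
    have ih := dist_le_sum_dist_of_chain (p ∘ Fin.castSucc) (q ∘ Fin.castSucc)
      fun i ↦ by simpa using hlink i.castSucc
    rw [Fin.sum_univ_castSucc]
    calc dist (p 0) (q (Fin.last (k + 1)))
        ≤ dist (p 0) (q (Fin.last k).castSucc) + dist (p (Fin.last (k + 1)))
            (q (Fin.last (k + 1))) := by
          rw [hlink (Fin.last k), Fin.succ_last]
          exact dist_triangle _ _ _
      _ ≤ _ := by
          gcongr
          simpa using ih

lemma poincareDist_le_sum_of_chain {k : ℕ} (u v : Fin (k + 1) → ℂ) (hu : ∀ i, ‖u i‖ < 1)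
    (hv : ∀ i, ‖v i‖ < 1) (hlink : ∀ i : Fin k, v i.castSucc = u i.succ) :
    poincareDist (u 0) (v (Fin.last k)) ≤ ∑ i, poincareDist (u i) (v i) := by
  rw [poincareDist_eq_dist_cayleyUHP (hu 0) (hv _),
    Finset.sum_congr rfl fun i _ ↦ poincareDist_eq_dist_cayleyUHP (hu i) (hv i)]
  exact dist_le_sum_dist_of_chain (fun i ↦ cayleyUHP (u i) (hu i)) (fun i ↦ cayleyUHP (v i) (hv i))
    fun i ↦ by simp only [hlink i]

section

variable {E : Type*} [NormedAddCommGroup E] [NormedSpace ℂ E]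

def kobayashiChainLengths (D : Set E) (x y : E) : Set ℝ :=
  { t : ℝ | ∃ (k : ℕ) (φ : Fin (k + 1) → ℂ → E) (a b : Fin (k + 1) → ℂ),
    (∀ i, DifferentiableOn ℂ (φ i) (ball (0 : ℂ) 1) ∧
      (φ i) '' (ball (0 : ℂ) 1) ⊆ D ∧
      a i ∈ ball (0 : ℂ) 1 ∧ b i ∈ ball (0 : ℂ) 1) ∧
    φ 0 (a 0) = x ∧ φ (Fin.last k) (b (Fin.last k)) = y ∧
    (∀ i : Fin k, φ i.castSucc (b i.castSucc) = φ i.succ (a i.succ)) ∧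
    t = ∑ i, poincareDist (a i) (b i) }

lemma kobayashiDist_eq_sInf (D : Set E) (x y : E) :
    kobayashiDist D x y = sInf (kobayashiChainLengths D x y) := rfl

lemma poincareDist_le_of_mem_kobayashiChainLengths {D : Set E} {F : E → ℂ}
    (hF : DifferentiableOn ℂ F D) (hFD : MapsTo F D (ball 0 1)) {x y : E} {t : ℝ}
    (ht : t ∈ kobayashiChainLengths D x y) : poincareDist (F x) (F y) ≤ t := by
  obtain ⟨k, φ, a, b, hφ, h0, hlast, hlink, rfl⟩ := ht
  subst h0 hlast
  have hφD : ∀ i, MapsTo (φ i) (ball 0 1) D := fun i z hz ↦ (hφ i).2.1 ⟨z, hz, rfl⟩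
  have hdisc : ∀ i, MapsTo (F ∘ φ i) (ball 0 1) (ball 0 1) := fun i ↦ hFD.comp (hφD i)
  have ha : ∀ i, ‖a i‖ < 1 := fun i ↦ mem_ball_zero_iff.1 (hφ i).2.2.1
  have hb : ∀ i, ‖b i‖ < 1 := fun i ↦ mem_ball_zero_iff.1 (hφ i).2.2.2
  calc poincareDist (F (φ 0 (a 0))) (F (φ (Fin.last k) (b (Fin.last k))))
      ≤ ∑ i, poincareDist (F (φ i (a i))) (F (φ i (b i))) :=
        poincareDist_le_sum_of_chain (fun i ↦ F (φ i (a i))) (fun i ↦ F (φ i (b i)))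
          (fun i ↦ mem_ball_zero_iff.1 (hdisc i (hφ i).2.2.1))
          (fun i ↦ mem_ball_zero_iff.1 (hdisc i (hφ i).2.2.2)) fun i ↦ congrArg F (hlink i)
    _ ≤ ∑ i, poincareDist (a i) (b i) := Finset.sum_le_sum fun i _ ↦
        poincareDist_le_of_mapsTo (hF.comp (hφ i).1 (hφD i)) (hdisc i) (ha i) (hb i)

lemma kobayashiChainLengths_nonempty_of_steps {D : Set E} {k : ℕ} (p : Fin (k + 2) → E) {δ : ℝ}
    (hball : ∀ i : Fin (k + 1), ball (p i.castSucc) δ ⊆ D)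
    (hstep : ∀ i : Fin (k + 1), dist (p i.succ) (p i.castSucc) < δ / 2) :
    (kobayashiChainLengths D (p 0) (p (Fin.last (k + 1)))).Nonempty := by
  refine ⟨_, k, fun i z ↦ p i.castSucc + (2 * z) • (p i.succ - p i.castSucc), fun _ ↦ 0,
    fun _ ↦ 1 / 2, fun i ↦ ⟨by fun_prop, ?_, by simp, by norm_num⟩, by simp, ?_, fun i ↦ ?_, rfl⟩
  · rintro _ ⟨z, hz, rfl⟩
    apply hball i
    have hz : ‖z‖ < 1 := mem_ball_zero_iff.1 hz
    have := hstep i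
    rw [mem_ball, dist_eq_norm, add_sub_cancel_left, norm_smul, norm_mul, Complex.norm_two,
      ← dist_eq_norm]
    nlinarith [norm_nonneg z, dist_nonneg (x := p i.succ) (y := p i.castSucc)]
  · norm_num
  · simp only [Fin.succ_castSucc]
    norm_num

lemma kobayashiChainLengths_nonempty_of_joinedIn {D : Set E} (hD : IsOpen D) {x y : E}
    (hxy : JoinedIn D x y) : (kobayashiChainLengths D x y).Nonempty := by
  obtain ⟨γ, hγ⟩ := hxy
  obtain ⟨δ, hδ, hthick⟩ :=
    (isCompact_range γ.continuous).exists_thickening_subset_open hD (range_subset_iff.2 hγ)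
  have hball : ∀ t, ball (γ.extend t) δ ⊆ D := fun t ↦
    (ball_subset_thickening (γ.extend_range ▸ mem_range_self t) δ).trans hthick
  have huc : UniformContinuous γ.extend :=
    (CompactSpace.uniformContinuous_of_continuous γ.continuous).comp
      (LipschitzWith.projIcc zero_le_one).uniformContinuous
  obtain ⟨η, hη, hηδ⟩ := Metric.uniformContinuous_iff.1 huc (δ / 2) (by positivity)
  obtain ⟨k, hk⟩ := exists_nat_one_div_lt hη
  have hchain := kobayashiChainLengths_nonempty_of_steps
    (fun j : Fin (k + 2) ↦ γ.extend (j / (k + 1))) (fun i ↦ hball _) fun i ↦ hηδ ?_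
  · have hk1 : (k : ℝ) + 1 ≠ 0 := by positivity
    simpa [div_self hk1] using hchain
  · rw [Real.dist_eq, Fin.val_succ, Fin.val_castSucc, Nat.cast_add_one, add_div,
      add_sub_cancel_left, abs_of_pos (by positivity)]
    exact hk

lemma kobayashiChainLengths_nonempty {D : Set E} (hD : IsOpen D) (hconn : IsConnected D)
    {x y : E} (hx : x ∈ D) (hy : y ∈ D) : (kobayashiChainLengths D x y).Nonempty :=
  kobayashiChainLengths_nonempty_of_joinedIn hD
    ((hD.isConnected_iff_isPathConnected.1 hconn).joinedIn x hx y hy)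

lemma poincareDist_le_kobayashiDist {D : Set E} (hD : IsOpen D) (hconn : IsConnected D)
    {x y : E} (hx : x ∈ D) (hy : y ∈ D) {F : E → ℂ} (hF : DifferentiableOn ℂ F D)
    (hFD : MapsTo F D (ball 0 1)) : poincareDist (F x) (F y) ≤ kobayashiDist D x y := by
  rw [kobayashiDist_eq_sInf]
  exact le_csInf (kobayashiChainLengths_nonempty hD hconn hx hy) fun _ ht ↦
    poincareDist_le_of_mem_kobayashiChainLengths hF hFD ht

lemma kobayashiChainLengths_subset_swap (D : Set E) (x y : E) :
    kobayashiChainLengths D x y ⊆ kobayashiChainLengths D y x := by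
  rintro _ ⟨k, φ, a, b, hφ, h0, hlast, hlink, rfl⟩
  refine ⟨k, φ ∘ Fin.rev, b ∘ Fin.rev, a ∘ Fin.rev, fun i ↦ ?_, by simpa using hlast,
    by simpa using h0, fun i ↦ ?_, ?_⟩
  · obtain ⟨hdiff, hmaps, ha, hb⟩ := hφ i.rev
    exact ⟨hdiff, hmaps, hb, ha⟩
  · simpa [Fin.rev_castSucc, Fin.rev_succ] using (hlink i.rev).symm
  · calc ∑ i, poincareDist (a i) (b i) = ∑ i, poincareDist (b i) (a i) :=
          Finset.sum_congr rfl fun i _ ↦ poincareDist_comm (mem_ball_zero_iff.1 (hφ i).2.2.1)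
            (mem_ball_zero_iff.1 (hφ i).2.2.2)
      _ = _ := (Equiv.sum_comp Fin.revPerm fun i ↦ poincareDist (b i) (a i)).symm

lemma kobayashiDist_comm (D : Set E) (x y : E) : kobayashiDist D x y = kobayashiDist D y x := by
  rw [kobayashiDist_eq_sInf, kobayashiDist_eq_sInf,
    (kobayashiChainLengths_subset_swap D x y).antisymm (kobayashiChainLengths_subset_swap D y x)]

lemma norm_le_tanh_kobayashiDist {F : Type*} [NormedAddCommGroup F] [NormedSpace ℂ F]
    {D : Set E} (hD : IsOpen D) (hconn : IsConnected D) {x y : E} (hx : x ∈ D) (hy : y ∈ D)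
    {f : E → F} (hf : DifferentiableOn ℂ f D) (hfD : MapsTo f D (ball 0 1)) (hfx : f x = 0) :
    ‖f y‖ ≤ Real.tanh (kobayashiDist D x y / 2) := by
  obtain ⟨g, hg, hgy⟩ := exists_dual_vector'' ℂ (f y)
  have hgD : MapsTo (g ∘ f) D (ball 0 1) := fun z hz ↦ by
    have hfz := mem_ball_zero_iff.1 (hfD hz)
    rw [mem_ball_zero_iff]
    calc ‖g (f z)‖ ≤ ‖g‖ * ‖f z‖ := g.le_opNorm _
      _ ≤ 1 * ‖f z‖ := by gcongr
      _ < 1 := by linarith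
  have h := poincareDist_le_kobayashiDist hD hconn hx hy
    (g.differentiable.comp_differentiableOn hf) hgD
  simp only [Function.comp_apply, hfx, map_zero, hgy] at h
  simpa using norm_le_tanh_of_poincareDist_zero_le (by simpa using mem_ball_zero_iff.1 (hfD hy)) h


def squeezingRadii (D : Set E) (p : E) : Set ℝ :=
  { r : ℝ | ∃ f : E → E, DifferentiableOn ℂ f D ∧ InjOn f D ∧ f '' D ⊆ ball 0 1 ∧ f p = 0 ∧
    0 < r ∧ ball (0 : E) r ⊆ f '' D }

lemma squeezingFn_eq_sSup {n : ℕ} (D : Set (EuclideanSpace ℂ (Fin n)))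
    (p : EuclideanSpace ℂ (Fin n)) : squeezingFn D p = sSup (squeezingRadii D p) := rfl

lemma le_one_of_mem_squeezingRadii [Nontrivial E] {D : Set E} {p : E} {r : ℝ}
    (hr : r ∈ squeezingRadii D p) : r ≤ 1 := by
  obtain ⟨f, -, -, hfD, -, -, hball⟩ := hr
  by_contra! h
  obtain ⟨v, hv⟩ := exists_norm_eq E zero_le_one
  have := mem_ball_zero_iff.1 (hfD (hball (mem_ball_zero_iff.2 (hv ▸ h))))
  linarith

lemma mem_squeezingRadii_of_recentre {D : Set E} {f : E → E} (hf : DifferentiableOn ℂ f D)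
    (hfi : InjOn f D) (hfD : f '' D ⊆ ball 0 1) {r : ℝ} (hball : ball 0 r ⊆ f '' D) {y : E}
    (hy : ‖f y‖ < r) : (r - ‖f y‖) / (1 + ‖f y‖) ∈ squeezingRadii D y := by
  set c := f y
  set s : ℝ := 1 + ‖c‖
  have hs : 0 < s := by positivity
  have hnorm : ∀ w : E, ‖s⁻¹ • (w - c)‖ = ‖w - c‖ / s := fun w ↦ by
    rw [norm_smul, Real.norm_of_nonneg (inv_nonneg.2 hs.le), inv_mul_eq_div]
  refine ⟨fun z ↦ s⁻¹ • (f z - c), (hf.sub_const c).const_smul _, ?_, ?_, by simp [c],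
    div_pos (by linarith) hs, ?_⟩
  · exact ((smul_right_injective E (inv_ne_zero hs.ne')).comp (sub_left_injective)).comp_injOn hfi
  · rintro _ ⟨z, hz, rfl⟩
    have hfz := mem_ball_zero_iff.1 (hfD ⟨z, hz, rfl⟩)
    rw [mem_ball_zero_iff, hnorm, div_lt_one hs]
    linarith [norm_sub_le (f z) c]
  · intro w hw
    have hw : ‖w‖ < (r - ‖c‖) / s := mem_ball_zero_iff.1 hw
    obtain ⟨z, hz, hfz⟩ : s • w + c ∈ f '' D := hball <| mem_ball_zero_iff.2 <|
      calc ‖s • w + c‖ ≤ s * ‖w‖ + ‖c‖ := by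
            simpa [norm_smul, Real.norm_of_nonneg hs.le] using norm_add_le (s • w) c
        _ < r := by rw [lt_div_iff₀ hs] at hw; linarith
    exact ⟨z, hz, by simp [hfz, smul_smul, inv_mul_cancel₀ hs.ne']⟩

lemma sSup_squeezingRadii_le_add {D : Set E} {x y : E} {T : ℝ}
    (hbound : ∀ f : E → E, DifferentiableOn ℂ f D → MapsTo f D (ball 0 1) → f x = 0 → ‖f y‖ ≤ T) :
    sSup (squeezingRadii D x) ≤ sSup (squeezingRadii D y) + 2 * T := by
  have hT : 0 ≤ T := by
    simpa using hbound (fun _ ↦ 0) (differentiableOn_const 0) (fun _ _ ↦ mem_ball_self one_pos) rfl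
  rcases subsingleton_or_nontrivial E with hE | hE
  -- in the zero space `squeezingRadii` may be unbounded (junk `sSup`), but there `x = y`
  · rw [Subsingleton.elim x y]
    linarith
  have hbdd : BddAbove (squeezingRadii D y) := ⟨1, fun _ ↦ le_one_of_mem_squeezingRadii⟩
  have hy : 0 ≤ sSup (squeezingRadii D y) := Real.sSup_nonneg fun _ ⟨_, _, _, _, _, hr, _⟩ ↦ hr.le
  refine Real.sSup_le (fun r hr ↦ ?_) (by linarith)
  have hr1 := le_one_of_mem_squeezingRadii hr
  obtain ⟨f, hf, hfi, hfD, hfx, -, hball⟩ := hr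
  have hfy := hbound f hf (mapsTo_iff_image_subset.2 hfD) hfx
  rcases le_or_gt r (2 * ‖f y‖) with h | h
  · linarith
  have hmem := le_csSup hbdd
    (mem_squeezingRadii_of_recentre hf hfi hfD hball (by linarith [norm_nonneg (f y)]))
  have : r ≤ (r - ‖f y‖) / (1 + ‖f y‖) + 2 * ‖f y‖ := by
    rw [div_add' _ _ _ (by positivity), le_div_iff₀ (by positivity)]
    nlinarith [norm_nonneg (f y)]
  linarith

end

theorem stmt_5_general {n : ℕ} (D : Set (EuclideanSpace ℂ (Fin n)))
    (hDopen : IsOpen D) (hDconn : IsConnected D)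
    (x y : EuclideanSpace ℂ (Fin n)) (hx : x ∈ D) (hy : y ∈ D) :
    |squeezingFn D x - squeezingFn D y| ≤ 2 * Real.tanh (kobayashiDist D x y / 2) := by
  have hxy := sSup_squeezingRadii_le_add fun f hf hfD hfx ↦
    norm_le_tanh_kobayashiDist hDopen hDconn hx hy hf hfD hfx
  have hyx := sSup_squeezingRadii_le_add fun f hf hfD hfy ↦
    kobayashiDist_comm D x y ▸ norm_le_tanh_kobayashiDist hDopen hDconn hy hx hf hfD hfy
  rw [squeezingFn_eq_sSup, squeezingFn_eq_sSup, abs_sub_le_iff]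
  constructor <;> linarith

/-- Lipschitz continuity of the squeezing function w.r.t. the metric
`T(x,y) = tanh(K_D(x,y)/2)`: `|s_D(x) - s_D(y)| ≤ 2 tanh(K_D(x,y)/2)`. -/
theorem stmt_5 {n : ℕ} (D : Set (EuclideanSpace ℂ (Fin n)))
    (hDopen : IsOpen D) (hDconn : IsConnected D) (hDbd : Bornology.IsBounded D)
    (x y : EuclideanSpace ℂ (Fin n)) (hx : x ∈ D) (hy : y ∈ D) :
    |squeezingFn D x - squeezingFn D y| ≤ 2 * Real.tanh (kobayashiDist D x y / 2) :=
  stmt_5_general D hDopen hDconn x y hx hy
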